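/- Fix coprime positive integers m and n, and let T be a standard Young tableau with n boxes such that the elements χ_i − q·t·χ_{i+1} (for 1 ≤ i ≤ n−1) and χ_j − q·t·χ_i (for 1 ≤ i < j ≤ n) are all nonzero in ℚ(q,t), so that the element c_{n,m}(T) ∈ ℚ(q,t) is defined; the same nonvanishing then holds for the transposed tableau Tᵗ with the roles of q and t exchanged. Then the coefficient c_{n,m}(T) is symmetric under simultaneously transposing the tableau and exchanging q and t: c_{n,m}(T) evaluated at (q,t) equals c_{n,m}(Tᵗ) evaluated at (t,q). Consequently, for every partition λ of n, the total coefficient c_{n,m}(λ) := ∑_{T of shape λ} c_{n,m}(T) satisfies c_{n,m}(λ)(q,t) = c_{n,m}(λᵗ)(t,q), where λᵗ is the transposed partition. -/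
import Mathlib


/-- A standard Young tableau with `nn` boxes, encoded by the function
`box : Fin nn → ℕ × ℕ` sending the label `i` (0-indexed) to the box added at step `i`,
written as `(row, column)` with 0-indexed coordinates (so that the box labeled `i`,
lying in column `a` and row `b` 1-indexed, is `box i = (b−1, a−1)`).  The condition says
exactly that the labels give a chain `∅ = λ⁽⁰⁾ ⊂ λ⁽¹⁾ ⊂ ⋯ ⊂ λ⁽ⁿ⁾` of Young diagrams
with `|λ⁽ⁱ⁾| = i`: the boxes are pairwise distinct, and whenever a box is added, its
upper and left neighbours (if any) carry strictly smaller labels. -/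
def IsSYT {nn : ℕ} (box : Fin nn → ℕ × ℕ) : Prop :=
  Function.Injective box ∧
    ∀ i : Fin nn,
      (0 < (box i).1 → ∃ j, j < i ∧ box j = ((box i).1 - 1, (box i).2)) ∧
      (0 < (box i).2 → ∃ j, j < i ∧ box j = ((box i).1, (box i).2 - 1))

/-- The weight `χ = q^{a−1}·t^{b−1}` of a box lying in column `a` and row `b`
(1-indexed), i.e. `q^c·t^r` for the 0-indexed coordinates `(r, c)`. -/
noncomputable def chiW {K : Type*} [Field K] (q t : K) (b : ℕ × ℕ) : K :=
  q ^ b.2 * t ^ b.1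

/-- The coefficient `c_{n,m}(T)` of a standard Young tableau `T` with `nn` boxes:
`c_{n,m}(T) = γⁿ · (∏_{i=1}^n χ_i^{S_{m/n}(i)}·(q·t·χ_i − 1)) /
  (∏_{i=1}^{n−1} (1 − q·t·χ_{i+1}/χ_i)) · ∏_{1 ≤ i < j ≤ n} ω(χ_j/χ_i)⁻¹`,
where `γ = (q−1)(t−1)/(q·t·(q·t−1))`, `S_{m/n}(i) = ⌊i·m/n⌋ − ⌊(i−1)·m/n⌋`, and
`ω(x) = (x−1)(x−q·t)/((x−q)(x−t))`. -/
noncomputable def cCoeff {K : Type*} [Field K] (m : ℕ) {nn : ℕ} (q t : K)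
    (box : Fin nn → ℕ × ℕ) : K :=
  ((q - 1) * (t - 1) / (q * t * (q * t - 1))) ^ nn *
      (∏ i : Fin nn,
        chiW q t (box i) ^ (((i : ℕ) + 1) * m / nn - (i : ℕ) * m / nn) *
          (q * t * chiW q t (box i) - 1)) /
      (∏ p ∈ Finset.univ.filter (fun p : Fin nn × Fin nn => (p.1 : ℕ) + 1 = (p.2 : ℕ)),
        (1 - q * t * chiW q t (box p.2) / chiW q t (box p.1))) *
      ∏ p ∈ Finset.univ.filter (fun p : Fin nn × Fin nn => p.1 < p.2),
        ((chiW q t (box p.2) / chiW q t (box p.1) - 1) *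
            (chiW q t (box p.2) / chiW q t (box p.1) - q * t) /
            ((chiW q t (box p.2) / chiW q t (box p.1) - q) *
              (chiW q t (box p.2) / chiW q t (box p.1) - t)))⁻¹

/-- The field `ℚ(q,t)` of rational functions in two independent variables over `ℚ`. -/
abbrev QQqt : Type := FractionRing (MvPolynomial (Fin 2) ℚ)

/-- The variable `q` of `ℚ(q,t)`. -/
noncomputable def qVar : QQqt := algebraMap (MvPolynomial (Fin 2) ℚ) QQqt (MvPolynomial.X 0)

/-- The variable `t` of `ℚ(q,t)`. -/
noncomputable def tVar : QQqt := algebraMap (MvPolynomial (Fin 2) ℚ) QQqt (MvPolynomial.X 1)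

lemma chiW_swap {K : Type*} [Field K] (q t : K) (b : ℕ × ℕ) :
    chiW t q (Prod.swap b) = chiW q t b := by
  simp [chiW, mul_comm]

lemma cCoeff_swap {K : Type*} [Field K] (m : ℕ) {nn : ℕ} (q t : K)
    (box : Fin nn → ℕ × ℕ) :
    cCoeff m t q (fun i => Prod.swap (box i)) = cCoeff m q t box := by
  unfold cCoeff
  simp only [chiW_swap, mul_comm t q, mul_comm (t - 1) (q - 1)]
  congr 1
  apply Finset.prod_congr rfl
  intro p _
  ring

lemma isSYT_swap {nn : ℕ} {box : Fin nn → ℕ × ℕ} (h : IsSYT box) :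
    IsSYT (fun i => Prod.swap (box i)) := by
  obtain ⟨hinj, hcond⟩ := h
  refine ⟨fun a b hab => hinj (Prod.swap_injective hab), fun i => ?_⟩
  obtain ⟨h1, h2⟩ := hcond i
  constructor
  · intro hp
    obtain ⟨j, hj, hje⟩ := h2 hp
    exact ⟨j, hj, by simp [hje, Prod.swap]⟩
  · intro hp
    obtain ⟨j, hj, hje⟩ := h1 hp
    exact ⟨j, hj, by simp [hje, Prod.swap]⟩

/-- Fix coprime positive integers `m, nn`, and let `T` be a standard
Young tableau with `nn` boxes such that `χ_i − q·t·χ_{i+1} ≠ 0` (for consecutive labels)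
and `χ_j − q·t·χ_i ≠ 0` (for `i < j`) in `ℚ(q,t)`, so that `c_{nn,m}(T)` is defined.
Then the same nonvanishing holds for the transposed tableau `Tᵗ` with `q` and `t`
exchanged, and `c_{nn,m}(T)` is symmetric under simultaneously transposing the tableau
and exchanging `q` and `t`: `c_{nn,m}(T)(q,t) = c_{nn,m}(Tᵗ)(t,q)`.  Consequently, for
every partition `λ` of `nn` (encoded as a Young diagram with `nn` cells), the total
coefficient `c_{nn,m}(λ) = ∑_{T of shape λ} c_{nn,m}(T)` satisfies
`c_{nn,m}(λ)(q,t) = c_{nn,m}(λᵗ)(t,q)`. -/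
theorem cCoeff_transpose_symmetry (m nn : ℕ) (hm : 0 < m) (hn : 0 < nn)
    (hco : Nat.Coprime m nn) (box : Fin nn → ℕ × ℕ) (hT : IsSYT box)
    (h1 : ∀ p : Fin nn × Fin nn, (p.1 : ℕ) + 1 = (p.2 : ℕ) →
        chiW qVar tVar (box p.1) - qVar * tVar * chiW qVar tVar (box p.2) ≠ 0)
    (h2 : ∀ p : Fin nn × Fin nn, p.1 < p.2 →
        chiW qVar tVar (box p.2) - qVar * tVar * chiW qVar tVar (box p.1) ≠ 0) :
    (∀ p : Fin nn × Fin nn, (p.1 : ℕ) + 1 = (p.2 : ℕ) →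
        chiW tVar qVar (Prod.swap (box p.1)) -
            tVar * qVar * chiW tVar qVar (Prod.swap (box p.2)) ≠ 0) ∧
    (∀ p : Fin nn × Fin nn, p.1 < p.2 →
        chiW tVar qVar (Prod.swap (box p.2)) -
            tVar * qVar * chiW tVar qVar (Prod.swap (box p.1)) ≠ 0) ∧
    cCoeff m qVar tVar box = cCoeff m tVar qVar (fun i => Prod.swap (box i)) ∧
    ∀ Y : YoungDiagram, Y.cells.card = nn →
      (∑ᶠ b : {b : Fin nn → ℕ × ℕ //
            IsSYT b ∧ Finset.image b Finset.univ = Y.cells},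
          cCoeff m qVar tVar b.1)
        = ∑ᶠ b : {b : Fin nn → ℕ × ℕ //
              IsSYT b ∧ Finset.image b Finset.univ = Y.transpose.cells},
            cCoeff m tVar qVar b.1 := by
  have hswap : ∀ b : ℕ × ℕ, chiW tVar qVar (Prod.swap b) = chiW qVar tVar b :=
    chiW_swap qVar tVar
  refine ⟨?_, ?_, ?_, ?_⟩
  · intro p hp
    rw [hswap, hswap, mul_comm tVar qVar]
    exact h1 p hp
  · intro p hp
    rw [hswap, hswap, mul_comm tVar qVar]
    exact h2 p hp
  · exact (cCoeff_swap m qVar tVar box).symm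
  · intro Y hY
    have key : ∀ (b : Fin nn → ℕ × ℕ) (W : YoungDiagram),
        Finset.image b Finset.univ = W.cells →
        Finset.image (fun i => Prod.swap (b i)) Finset.univ = W.transpose.cells := by
      intro b W hb
      ext c
      simp only [Finset.mem_image, Finset.mem_univ, true_and]
      rw [show (c ∈ W.transpose.cells) ↔ c ∈ W.transpose from Iff.rfl,
        YoungDiagram.mem_transpose]
      constructor
      · rintro ⟨i, rfl⟩
        rw [Prod.swap_swap]
        have : b i ∈ Finset.image b Finset.univ := Finset.mem_image_of_mem b (Finset.mem_univ i)
        rw [hb] at this; exact this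
      · intro hc
        rw [← YoungDiagram.mem_cells, ← hb] at hc
        simp only [Finset.mem_image, Finset.mem_univ, true_and] at hc
        obtain ⟨i, hi⟩ := hc
        exact ⟨i, by rw [hi, Prod.swap_swap]⟩
    set A := {b : Fin nn → ℕ × ℕ // IsSYT b ∧ Finset.image b Finset.univ = Y.cells}
    set B := {b : Fin nn → ℕ × ℕ //
        IsSYT b ∧ Finset.image b Finset.univ = Y.transpose.cells}
    have hbij : Function.Bijective (fun x : A =>
        (⟨fun i => Prod.swap (x.1 i), isSYT_swap x.2.1, key x.1 Y x.2.2⟩ : B)) := by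
      constructor
      · intro x y hxy
        apply Subtype.ext
        funext i
        have := congrArg (fun z : B => Prod.swap (z.1 i)) hxy
        simpa using this
      · intro y
        have him : Finset.image (fun i => Prod.swap (y.1 i)) Finset.univ = Y.cells := by
          have := key y.1 Y.transpose y.2.2
          rwa [YoungDiagram.transpose_transpose] at this
        refine ⟨⟨fun i => Prod.swap (y.1 i), isSYT_swap y.2.1, him⟩, ?_⟩
        apply Subtype.ext
        funext i
        simp
    exact finsum_eq_of_bijective _ hbij
      (fun x => (cCoeff_swap m qVar tVar x.1).symm)
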